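/- Let φ1 and φ2 be unit vectors on the same finite-dimensional space with ⟨φ1|φ2⟩ ≠ 0, and for 0 < α < 1 let f_α : ℝ → ℝ ∪ {+∞} be defined by f_α(λ) := −λ^α for λ ≥ 0 and f_α(λ) := +∞ for λ < 0. Then: (a) for 0 < α ≤ 1/2, D_{f_α}^min(|φ1⟩⟨φ1| ‖ |φ2⟩⟨φ2|) = −|⟨φ1|φ2⟩|^{2(1−α)}; (b) for 1/2 ≤ α < 1, D_{f_α}^min(|φ1⟩⟨φ1| ‖ |φ2⟩⟨φ2|) = −|⟨φ1|φ2⟩|^{2α}. -/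

import Mathlib

open Filter Matrix
open scoped ComplexOrder
open scoped BigOperators

noncomputable section

attribute [local instance] Classical.propDecidable

/-- The effective domain of an extended-real-valued function. -/
def edom (f : ℝ → EReal) : Set ℝ := {x | f x < ⊤}

/-- The convex conjugate `f*`(t) = sup_λ (t·λ − f(λ)). -/
def econj (f : ℝ → EReal) (t : ℝ) : EReal := ⨆ l : ℝ, ((t * l : ℝ) : EReal) - f l

/-- The function `g` associated to `f`, i.e. the lsc positively homogeneous
extension of `(λ1,λ2) ↦ λ2 f(λ1/λ2)`. -/
def gfun (f : ℝ → EReal) (l1 l2 : ℝ) : EReal :=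
  if l1 = 0 ∧ l2 = 0 then 0
  else if l1 ∈ edom f ∧ 0 < l2 then ((l2 : ℝ) : EReal) * f (l1 / l2)
  else if l1 ∈ edom f ∧ l2 = 0 then
    limUnder (nhdsWithin 0 (Set.Ioi 0)) fun u : ℝ => ((u : ℝ) : EReal) * f (l1 / u)
  else ⊤

/-- A finite-outcome POVM. -/
def IsPOVM {n m : ℕ} (M : Fin m → Matrix (Fin n) (Fin n) ℂ) : Prop :=
  (∀ x, (M x).PosSemidef) ∧ ∑ x, M x = 1

/-- The maximized measured f-divergence `D_f^min`. -/
def Dfmin (f : ℝ → EReal) {n : ℕ} (ρ1 ρ2 : Matrix (Fin n) (Fin n) ℂ) : EReal :=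
  ⨆ (m : ℕ) (M : Fin m → Matrix (Fin n) (Fin n) ℂ) (_ : IsPOVM M),
    ∑ x, gfun f ((ρ1 * M x).trace.re) ((ρ2 * M x).trace.re)

/-- Functional calculus on a Hermitian matrix: apply `h` to the eigenvalues. -/
def hermFC {k : ℕ} (h : ℝ → ℝ) {A : Matrix (Fin k) (Fin k) ℂ} (hA : A.IsHermitian) :
    Matrix (Fin k) (Fin k) ℂ :=
  (hA.eigenvectorUnitary : Matrix (Fin k) (Fin k) ℂ) *
    Matrix.diagonal (fun i => (h (hA.eigenvalues i) : ℂ)) *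
    (star (hA.eigenvectorUnitary : Matrix (Fin k) (Fin k) ℂ))

/-- The spectrum of the Hermitian matrix `A` is contained in `S`. -/
def specIn {k : ℕ} {A : Matrix (Fin k) (Fin k) ℂ} (hA : A.IsHermitian) (S : Set ℝ) : Prop :=
  ∀ i, hA.eigenvalues i ∈ S

/-- The Loewner order: `A ≤ B`. -/
def Loewner {k : ℕ} (A B : Matrix (Fin k) (Fin k) ℂ) : Prop := (B - A).PosSemidef

/-- Operator convexity of a real function on a set `S` (midpoint form, via
the functional calculus on Hermitian matrices with spectrum in `S`). -/
def OpConvexOn (h : ℝ → ℝ) (S : Set ℝ) : Prop :=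
  ∀ (k : ℕ), 1 ≤ k → ∀ (A B : Matrix (Fin k) (Fin k) ℂ)
    (hA : A.IsHermitian) (hB : B.IsHermitian) (hM : ((1/2 : ℂ) • (A + B)).IsHermitian),
    specIn hA S → specIn hB S →
    Loewner (hermFC h hM) ((1/2 : ℂ) • (hermFC h hA + hermFC h hB))

/-- The real-valued version of the convex conjugate of `f` (used for the
functional calculus; on `dom f*` it agrees with `f*` when `f` is proper). -/
def econjR (f : ℝ → EReal) (t : ℝ) : ℝ := (econj f t).toReal

/-- Condition (I): `f*` is operator convex on its effective domain. -/
def CondI (f : ℝ → EReal) : Prop := OpConvexOn (econjR f) (edom (econj f))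

/-- `f` is a proper lower semicontinuous convex function with `dom f ⊇ (0,∞)`. -/
structure NiceF (f : ℝ → EReal) : Prop where
  ne_bot : ∀ x, f x ≠ ⊥
  ne_top : ∃ x, f x ≠ ⊤
  lsc : LowerSemicontinuous f
  convex : ∀ x y a b : ℝ, 0 ≤ a → 0 ≤ b → a + b = 1 →
    f (a * x + b * y) ≤ ((a : ℝ) : EReal) * f x + ((b : ℝ) : EReal) * f y
  dom : Set.Ioi (0 : ℝ) ⊆ edom f

/-- `f_α(λ) = −λ^α` for `λ ≥ 0`, `+∞` for `λ < 0` (here `0 < α < 1`). -/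
def falpha (α : ℝ) : ℝ → EReal := fun l => if 0 ≤ l then ((-(l ^ α) : ℝ) : EReal) else ⊤

/-! For pure states the outcome distributions of a POVM `(M x)` are `p x = ⟨φ1|M x|φ1⟩` and
`q x = ⟨φ2|M x|φ2⟩`, and the objective is `-∑ p^α q^(1-α)`. Cauchy–Schwarz for each semi-inner
product `⟨·|M x|·⟩` gives `|⟨φ1|φ2⟩| ≤ ∑ √(p q)`, and for `α ≥ 1/2` the weighted Hölder inequality
(weights `q`, exponent `2α`) gives `(∑ √(p q))^(2α) ≤ ∑ p^α q^(1-α)`. The projective measurement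
`{|φ2⟩⟨φ2|, 1 - |φ2⟩⟨φ2|}` attains this bound. The case `α ≤ 1/2` reduces to the other one since
`g_α(λ1, λ2) = g_(1-α)(λ2, λ1)` swaps the roles of the two states. -/

lemma mul_div_rpow_eq_rpow_mul_rpow {α p q : ℝ} (hp : 0 ≤ p) (hq : 0 < q) :
    q * (p / q) ^ α = p ^ α * q ^ (1 - α) := by
  rw [Real.div_rpow hp hq.le, Real.rpow_sub hq, Real.rpow_one]
  field_simp

lemma rpow_two_mul_sum_sqrt_mul_le {ι : Type*} (s : Finset ι) {p q : ι → ℝ}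
    (hp : ∀ i, 0 ≤ p i) (hq : ∀ i, 0 ≤ q i) (hq1 : ∑ i ∈ s, q i = 1)
    {β : ℝ} (hβ : 1 / 2 ≤ β) (hβ1 : β < 1) :
    (∑ i ∈ s, √(p i * q i)) ^ (2 * β) ≤ ∑ i ∈ s, p i ^ β * q i ^ (1 - β) := by
  have hβ0 : 0 < 2 * β := by linarith
  have holder := Real.inner_le_weight_mul_Lp_of_nonneg s (p := 2 * β) (by linarith) q
    (fun i => √(p i / q i)) hq (fun i => Real.sqrt_nonneg _)
  have hsqrt : ∀ i, q i * √(p i / q i) = √(p i * q i) := by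
    intro i
    rcases (hq i).lt_or_eq with hqi | hqi
    · have : p i * q i = q i ^ 2 * (p i / q i) := by field_simp
      rw [this, Real.sqrt_mul (sq_nonneg _), Real.sqrt_sq (hq i)]
    · simp [← hqi]
  have hpow : ∀ i, q i * √(p i / q i) ^ (2 * β) = p i ^ β * q i ^ (1 - β) := by
    intro i
    rcases (hq i).lt_or_eq with hqi | hqi
    · rw [Real.sqrt_eq_rpow, ← Real.rpow_mul (div_nonneg (hp i) hqi.le),
        show (1 / 2 : ℝ) * (2 * β) = β by ring, mul_div_rpow_eq_rpow_mul_rpow (hp i) hqi]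
    · simp [← hqi, Real.zero_rpow (by linarith : 1 - β ≠ 0)]
  simp only [hsqrt, hpow, hq1, Real.one_rpow, one_mul] at holder
  rw [← Real.le_rpow_inv_iff_of_pos (Finset.sum_nonneg fun i _ => Real.sqrt_nonneg _)
    (Finset.sum_nonneg fun i _ => by have := hp i; have := hq i; positivity) hβ0]
  exact holder

lemma EReal.coe_finset_sum {ι : Type*} (s : Finset ι) (f : ι → ℝ) :
    ((∑ i ∈ s, f i : ℝ) : EReal) = ∑ i ∈ s, (f i : EReal) :=
  map_sum (⟨⟨(↑), EReal.coe_zero⟩, EReal.coe_add⟩ : ℝ →+ EReal) f s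

lemma mem_edom_falpha {α l : ℝ} : l ∈ edom (falpha α) ↔ 0 ≤ l := by
  by_cases hl : 0 ≤ l
  · simpa [edom, falpha, hl] using EReal.coe_lt_top (-(l ^ α))
  · simp [edom, falpha, hl]

lemma coe_mul_falpha_div {α p q : ℝ} (hp : 0 ≤ p) (hq : 0 < q) :
    (q : EReal) * falpha α (p / q) = ((-(p ^ α * q ^ (1 - α)) : ℝ) : EReal) := by
  rw [falpha, if_pos (div_nonneg hp hq.le), ← EReal.coe_mul, mul_neg,
    mul_div_rpow_eq_rpow_mul_rpow hp hq]

lemma gfun_falpha {α p q : ℝ} (hα0 : 0 < α) (hα1 : α < 1) (hp : 0 ≤ p) (hq : 0 ≤ q) :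
    gfun (falpha α) p q = ((-(p ^ α * q ^ (1 - α)) : ℝ) : EReal) := by
  rcases hq.lt_or_eq with hq | rfl
  · rw [gfun, if_neg (by grind), if_pos ⟨mem_edom_falpha.2 hp, hq⟩, coe_mul_falpha_div hp hq]
  rcases hp.lt_or_eq with hp | rfl
  · rw [gfun, if_neg (by grind), if_neg (by grind), if_pos ⟨mem_edom_falpha.2 hp.le, rfl⟩]
    have hcont : ContinuousAt (fun u : ℝ => ((-(p ^ α * u ^ (1 - α)) : ℝ) : EReal)) 0 :=
      continuous_coe_real_ereal.continuousAt.comp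
        ((Real.continuousAt_rpow_const 0 (1 - α) (Or.inr (by linarith))).const_mul _).neg
    refine ((hcont.tendsto.mono_left nhdsWithin_le_nhds).congr' ?_).limUnder_eq
    filter_upwards [self_mem_nhdsWithin] with u hu
    exact (coe_mul_falpha_div hp.le hu).symm
  · rw [gfun, if_pos ⟨rfl, rfl⟩, Real.zero_rpow hα0.ne', zero_mul, neg_zero, EReal.coe_zero]

lemma gfun_falpha_comm {α p q : ℝ} (hα0 : 0 < α) (hα1 : α < 1) (hp : 0 ≤ p) (hq : 0 ≤ q) :
    gfun (falpha α) p q = gfun (falpha (1 - α)) q p := by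
  rw [gfun_falpha hα0 hα1 hp hq, gfun_falpha (by linarith) (by linarith) hq hp, sub_sub_cancel,
    mul_comm]

namespace Matrix

variable {ι : Type*} [Fintype ι]

lemma trace_vecMulVec_star_mul (φ : ι → ℂ) (M : Matrix ι ι ℂ) :
    (vecMulVec φ (star φ) * M).trace = star φ ⬝ᵥ (M *ᵥ φ) := by
  rw [vecMulVec_mul, trace_vecMulVec, dotProduct_comm, dotProduct_mulVec]

lemma re_trace_vecMulVec_star_mul_vecMulVec_star (φ ψ : ι → ℂ) :
    (vecMulVec φ (star φ) * vecMulVec ψ (star ψ)).trace.re = ‖star φ ⬝ᵥ ψ‖ ^ 2 := by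
  rw [trace_vecMulVec_star_mul, vecMulVec_mulVec, op_smul_eq_smul, dotProduct_smul, smul_eq_mul,
    star_dotProduct, Complex.star_def, Complex.conj_mul']
  norm_cast

lemma re_trace_vecMulVec_star_mul_one_sub [DecidableEq ι] {φ : ι → ℂ} (hφ : star φ ⬝ᵥ φ = 1)
    (ψ : ι → ℂ) :
    (vecMulVec φ (star φ) * (1 - vecMulVec ψ (star ψ))).trace.re = 1 - ‖star φ ⬝ᵥ ψ‖ ^ 2 := by
  rw [mul_sub, mul_one, trace_sub, Complex.sub_re, re_trace_vecMulVec_star_mul_vecMulVec_star,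
    trace_vecMulVec, dotProduct_comm, hφ, Complex.one_re]

lemma PosSemidef.re_trace_mul_nonneg {ρ M : Matrix ι ι ℂ} (hρ : ρ.PosSemidef)
    (hM : M.PosSemidef) : 0 ≤ (ρ * M).trace.re := by
  obtain ⟨m, v, rfl⟩ := posSemidef_iff_eq_sum_vecMulVec.mp hρ
  rw [Finset.sum_mul, trace_sum, Complex.re_sum]
  exact Finset.sum_nonneg fun i _ => trace_vecMulVec_star_mul (v i) M ▸ hM.re_dotProduct_nonneg _

lemma PosSemidef.norm_dotProduct_mulVec_le {M : Matrix ι ι ℂ} (hM : M.PosSemidef)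
    (u v : ι → ℂ) :
    ‖star u ⬝ᵥ (M *ᵥ v)‖ ≤ √((star u ⬝ᵥ (M *ᵥ u)).re * (star v ⬝ᵥ (M *ᵥ v)).re) := by
  let := M.toSeminormedAddCommGroup hM
  let := M.toInnerProductSpace hM
  have h := norm_inner_le_norm (𝕜 := ℂ) u v
  rw [norm_eq_sqrt_re_inner (𝕜 := ℂ) u, norm_eq_sqrt_re_inner (𝕜 := ℂ) v] at h
  have hinner : ∀ x y : ι → ℂ, inner ℂ x y = star x ⬝ᵥ (M *ᵥ y) := fun x y => dotProduct_comm _ _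
  rw [hinner, hinner, hinner, ← Real.sqrt_mul (hM.re_dotProduct_nonneg u)] at h
  exact h

end Matrix

namespace IsPOVM

variable {n m : ℕ} {M : Fin m → Matrix (Fin n) (Fin n) ℂ}

lemma sum_dotProduct_mulVec (hM : IsPOVM M) (u v : Fin n → ℂ) :
    ∑ x, star u ⬝ᵥ (M x *ᵥ v) = star u ⬝ᵥ v := by
  simp only [← dotProduct_sum, ← Matrix.sum_mulVec, hM.2, Matrix.one_mulVec]

lemma norm_dotProduct_le_sum_sqrt (hM : IsPOVM M) (u v : Fin n → ℂ) :
    ‖star u ⬝ᵥ v‖ ≤ ∑ x, √((star u ⬝ᵥ (M x *ᵥ u)).re * (star v ⬝ᵥ (M x *ᵥ v)).re) := by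
  rw [← hM.sum_dotProduct_mulVec]
  exact (norm_sum_le _ _).trans
    (Finset.sum_le_sum fun x _ => (hM.1 x).norm_dotProduct_mulVec_le u v)

end IsPOVM

lemma isPOVM_vecMulVec_one_sub {n : ℕ} {ψ : Fin n → ℂ} (hψ : star ψ ⬝ᵥ ψ = 1) :
    IsPOVM ![vecMulVec ψ (star ψ), 1 - vecMulVec ψ (star ψ)] := by
  set P := vecMulVec ψ (star ψ)
  have hP : P.PosSemidef := posSemidef_vecMulVec_self_star ψ
  have hPP : P * P = P := by
    rw [vecMulVec_mul_vecMulVec, hψ, one_smul]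
  have hQ : (1 - P).PosSemidef := by
    have h : (1 - P)ᴴ * (1 - P) = 1 - P := by
      rw [conjTranspose_sub, conjTranspose_one, hP.isHermitian.eq, sub_mul, one_mul, mul_sub,
        mul_one, hPP, sub_self, sub_zero]
    exact h ▸ posSemidef_conjTranspose_mul_self _
  refine ⟨fun x => ?_, ?_⟩
  · fin_cases x
    · exact hP
    · exact hQ
  · simp [Fin.sum_univ_two]

lemma sum_gfun_le_Dfmin (f : ℝ → EReal) {n m : ℕ} (ρ1 ρ2 : Matrix (Fin n) (Fin n) ℂ)
    {M : Fin m → Matrix (Fin n) (Fin n) ℂ} (hM : IsPOVM M) :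
    ∑ x, gfun f ((ρ1 * M x).trace.re) ((ρ2 * M x).trace.re) ≤ Dfmin f ρ1 ρ2 :=
  le_iSup_of_le m (le_iSup_of_le M (le_iSup_of_le hM le_rfl))

lemma Dfmin_falpha_comm {α : ℝ} (hα0 : 0 < α) (hα1 : α < 1) {n : ℕ}
    {ρ1 ρ2 : Matrix (Fin n) (Fin n) ℂ} (hρ1 : ρ1.PosSemidef) (hρ2 : ρ2.PosSemidef) :
    Dfmin (falpha α) ρ1 ρ2 = Dfmin (falpha (1 - α)) ρ2 ρ1 :=
  iSup_congr fun _ => iSup_congr fun _ => iSup_congr fun hM => Finset.sum_congr rfl fun x _ =>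
    gfun_falpha_comm hα0 hα1 (hρ1.re_trace_mul_nonneg (hM.1 x)) (hρ2.re_trace_mul_nonneg (hM.1 x))

section PureStates

variable {n : ℕ} {φ1 φ2 : Fin n → ℂ} {α : ℝ}

lemma Dfmin_falpha_vecMulVec_le (hφ2 : star φ2 ⬝ᵥ φ2 = 1) (hα : 1 / 2 ≤ α) (hα1 : α < 1) :
    Dfmin (falpha α) (vecMulVec φ1 (star φ1)) (vecMulVec φ2 (star φ2)) ≤
      ((-(‖star φ1 ⬝ᵥ φ2‖ ^ (2 * α)) : ℝ) : EReal) := by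
  refine iSup_le fun m => iSup_le fun M => iSup_le fun hM => ?_
  set p : Fin m → ℝ := fun x => (star φ1 ⬝ᵥ (M x *ᵥ φ1)).re
  set q : Fin m → ℝ := fun x => (star φ2 ⬝ᵥ (M x *ᵥ φ2)).re
  have hp : ∀ x, 0 ≤ p x := fun x => (hM.1 x).re_dotProduct_nonneg φ1
  have hq : ∀ x, 0 ≤ q x := fun x => (hM.1 x).re_dotProduct_nonneg φ2
  have hq1 : ∑ x, q x = 1 := by
    rw [← Complex.re_sum, hM.sum_dotProduct_mulVec, hφ2, Complex.one_re]
  have hsum : ∑ x, gfun (falpha α) ((vecMulVec φ1 (star φ1) * M x).trace.re)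
      ((vecMulVec φ2 (star φ2) * M x).trace.re) =
        ((-∑ x, p x ^ α * q x ^ (1 - α) : ℝ) : EReal) := by
    rw [← Finset.sum_neg_distrib, EReal.coe_finset_sum]
    refine Finset.sum_congr rfl fun x _ => ?_
    rw [trace_vecMulVec_star_mul, trace_vecMulVec_star_mul]
    exact gfun_falpha (by linarith) hα1 (hp x) (hq x)
  have hbound : ‖star φ1 ⬝ᵥ φ2‖ ^ (2 * α) ≤ ∑ x, p x ^ α * q x ^ (1 - α) :=
    (Real.rpow_le_rpow (norm_nonneg _) (hM.norm_dotProduct_le_sum_sqrt φ1 φ2) (by linarith)).trans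
      (rpow_two_mul_sum_sqrt_mul_le _ hp hq hq1 hα hα1)
  rw [hsum, EReal.coe_le_coe_iff]
  linarith

lemma neg_rpow_le_Dfmin_falpha_vecMulVec (hφ1 : star φ1 ⬝ᵥ φ1 = 1) (hφ2 : star φ2 ⬝ᵥ φ2 = 1)
    (hα0 : 0 < α) (hα1 : α < 1) :
    ((-(‖star φ1 ⬝ᵥ φ2‖ ^ (2 * α)) : ℝ) : EReal) ≤
      Dfmin (falpha α) (vecMulVec φ1 (star φ1)) (vecMulVec φ2 (star φ2)) := by
  have hF1 : ‖star φ1 ⬝ᵥ φ2‖ ≤ 1 := by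
    simpa [hφ1, hφ2] using PosSemidef.one.norm_dotProduct_mulVec_le φ1 φ2
  have hF2 : 0 ≤ 1 - ‖star φ1 ⬝ᵥ φ2‖ ^ 2 := by nlinarith [norm_nonneg (star φ1 ⬝ᵥ φ2)]
  refine le_of_eq_of_le ?_ (sum_gfun_le_Dfmin _ _ _ (isPOVM_vecMulVec_one_sub hφ2))
  simp only [Fin.sum_univ_two, cons_val_zero, cons_val_one,
    re_trace_vecMulVec_star_mul_vecMulVec_star, re_trace_vecMulVec_star_mul_one_sub hφ1,
    re_trace_vecMulVec_star_mul_one_sub hφ2, hφ2, norm_one, one_pow, sub_self]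
  rw [gfun_falpha hα0 hα1 (sq_nonneg _) zero_le_one, gfun_falpha hα0 hα1 hF2 le_rfl,
    ← EReal.coe_add, Real.one_rpow, Real.zero_rpow (by linarith), ← Real.rpow_natCast,
    ← Real.rpow_mul (norm_nonneg _)]
  norm_num

lemma Dfmin_falpha_vecMulVec_of_half_le (hφ1 : star φ1 ⬝ᵥ φ1 = 1) (hφ2 : star φ2 ⬝ᵥ φ2 = 1)
    (hα : 1 / 2 ≤ α) (hα1 : α < 1) :
    Dfmin (falpha α) (vecMulVec φ1 (star φ1)) (vecMulVec φ2 (star φ2)) =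
      ((-(‖star φ1 ⬝ᵥ φ2‖ ^ (2 * α)) : ℝ) : EReal) :=
  le_antisymm (Dfmin_falpha_vecMulVec_le hφ2 hα hα1)
    (neg_rpow_le_Dfmin_falpha_vecMulVec hφ1 hφ2 (by linarith) hα1)

end PureStates

theorem stmt_16_general {n : ℕ} (φ1 φ2 : Fin n → ℂ)
    (hφ1 : star φ1 ⬝ᵥ φ1 = 1) (hφ2 : star φ2 ⬝ᵥ φ2 = 1)
    (α : ℝ) (hα0 : 0 < α) (hα1 : α < 1) :
    (α ≤ 1/2 →
      Dfmin (falpha α) (Matrix.vecMulVec φ1 (star φ1)) (Matrix.vecMulVec φ2 (star φ2)) =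
        ((-(‖star φ1 ⬝ᵥ φ2‖ ^ (2 * (1 - α))) : ℝ) : EReal)) ∧
    (1/2 ≤ α →
      Dfmin (falpha α) (Matrix.vecMulVec φ1 (star φ1)) (Matrix.vecMulVec φ2 (star φ2)) =
        ((-(‖star φ1 ⬝ᵥ φ2‖ ^ (2 * α)) : ℝ) : EReal)) := by
  refine ⟨fun hα => ?_, fun hα => Dfmin_falpha_vecMulVec_of_half_le hφ1 hφ2 hα hα1⟩
  rw [Dfmin_falpha_comm hα0 hα1 (posSemidef_vecMulVec_self_star φ1)
      (posSemidef_vecMulVec_self_star φ2),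
    Dfmin_falpha_vecMulVec_of_half_le hφ2 hφ1 (by linarith) (by linarith), star_dotProduct,
    norm_star]

/-- for two pure states,
`D_{f_α}^min = −|⟨φ1|φ2⟩|^{2(1−α)}` for `0 < α ≤ 1/2` and
`D_{f_α}^min = −|⟨φ1|φ2⟩|^{2α}` for `1/2 ≤ α < 1`. -/
theorem stmt_16 {n : ℕ} (φ1 φ2 : Fin n → ℂ)
    (hφ1 : star φ1 ⬝ᵥ φ1 = 1) (hφ2 : star φ2 ⬝ᵥ φ2 = 1)
    (hne : star φ1 ⬝ᵥ φ2 ≠ 0) (α : ℝ) (hα0 : 0 < α) (hα1 : α < 1) :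
    (α ≤ 1/2 →
      Dfmin (falpha α) (Matrix.vecMulVec φ1 (star φ1)) (Matrix.vecMulVec φ2 (star φ2)) =
        ((-(‖star φ1 ⬝ᵥ φ2‖ ^ (2 * (1 - α))) : ℝ) : EReal)) ∧
    (1/2 ≤ α →
      Dfmin (falpha α) (Matrix.vecMulVec φ1 (star φ1)) (Matrix.vecMulVec φ2 (star φ2)) =
        ((-(‖star φ1 ⬝ᵥ φ2‖ ^ (2 * α)) : ℝ) : EReal)) :=
  stmt_16_general φ1 φ2 hφ1 hφ2 α hα0 hα1
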